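/- Let q be a real number with q > 1 and let m, N be integers with 0 ≤ m ≤ N. Then Σ_{i=0}^{m} (−1)^{m−i} · q^{(m−i)(m−i−1)/2} · [m choose i]_q · (∏_{k=i+1}^{m} (q^k + 1)) · q^{(2i+1)N} = Σ_{ℓ=0}^{m} (−1)^{ℓ} · q^{N + (m−ℓ)(m−ℓ−1) + ℓ²} · [m choose ℓ]_{q²} · ∏_{j=0}^{m−ℓ−1} (q^{2(N−j)} − 1). -/

import Mathlib

/-!
Write `p = q²` and `X = q^(2N)`. Up to a power of `p`, the product in the `ℓ`-th term on
the right is `∏_{j < m-ℓ} (X - p^j)`, which the Cauchy `q`-binomial theorem expands in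
powers of `X`. After `[m, ℓ]_p [m-ℓ, i]_p = [m, i]_p [m-i, ℓ]_p` and an exchange of the two
sums, the coefficient of `X^i` is `[m, i]_p · ∑_ℓ q^(ℓ²) p^C(m-i-ℓ, 2) [m-i, ℓ]_p`. By
induction on `r` (Pascal's rule plus the symmetry `ℓ ↦ r - ℓ`),
`∑_ℓ q^(ℓ²) p^C(r-ℓ, 2) [r, ℓ]_p = q^C(r, 2) ∏_{k=1}^{r} (q^k + 1)`, and
`[m, i]_{q²} ∏_{k=1}^{m-i} (q^k + 1) = [m, i]_q ∏_{k=i+1}^{m} (q^k + 1)` because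
`q^(2k) - 1 = (q^k - 1)(q^k + 1)`; this is the `i`-th term on the left.
-/

/-- The Gaussian binomial coefficient `[n choose k]_q` for a real base `q`. -/
noncomputable def gbinom (q : ℝ) (n k : ℕ) : ℝ :=
  ∏ j ∈ Finset.Icc 1 k, (q ^ (n - k + j) - 1) / (q ^ j - 1)

open Finset

lemma prod_range_pow_sub_pow {R : Type*} [CommRing R] (p : R) {r N : ℕ} (h : r ≤ N) :
    ∏ j ∈ range r, (p ^ N - p ^ j) = p ^ r.choose 2 * ∏ j ∈ range r, (p ^ (N - j) - 1) := by
  rw [Nat.choose_two_right, ← sum_range_id, ← prod_pow_eq_pow_sum, ← prod_mul_distrib]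
  refine prod_congr rfl fun j hj => ?_
  rw [mul_sub, mul_one, ← pow_add, Nat.add_sub_cancel' (by have := mem_range.1 hj; omega)]

noncomputable def qFactorial (q : ℝ) (n : ℕ) : ℝ := ∏ j ∈ Icc 1 n, (q ^ j - 1)

section
variable {q : ℝ}

lemma qFactorial_zero : qFactorial q 0 = 1 := by simp [qFactorial]

lemma qFactorial_succ (n : ℕ) : qFactorial q (n + 1) = qFactorial q n * (q ^ (n + 1) - 1) :=
  prod_Icc_succ_top (by omega) _

lemma qFactorial_pos (hq : 1 < q) (n : ℕ) : 0 < qFactorial q n :=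
  prod_pos fun j hj => sub_pos.2 (one_lt_pow₀ hq (by have := (mem_Icc.1 hj).1; omega))

lemma qFactorial_add (k n : ℕ) :
    qFactorial q (k + n) = qFactorial q k * ∏ j ∈ Icc 1 n, (q ^ (k + j) - 1) := by
  induction n with
  | zero => simp
  | succ n ih => rw [← add_assoc, qFactorial_succ, ih, prod_Icc_succ_top (by omega), mul_assoc,
    add_assoc]

lemma qFactorial_sq (n : ℕ) :
    qFactorial (q ^ 2) n = qFactorial q n * ∏ k ∈ Icc 1 n, (q ^ k + 1) := by
  rw [qFactorial, qFactorial, ← prod_mul_distrib]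
  refine prod_congr rfl fun k _ => ?_
  rw [← pow_mul, mul_comm, pow_mul]
  ring

lemma gbinom_eq_div (hq : 1 < q) {n k : ℕ} (h : k ≤ n) :
    gbinom q n k = qFactorial q n / (qFactorial q k * qFactorial q (n - k)) := by
  obtain ⟨n, rfl⟩ := Nat.exists_eq_add_of_le h
  rw [gbinom, prod_div_distrib, Nat.add_sub_cancel_left, add_comm k n, qFactorial_add]
  have := (qFactorial_pos hq n).ne'
  field_simp
  rfl

lemma gbinom_zero_right (n : ℕ) : gbinom q n 0 = 1 := by simp [gbinom]

lemma gbinom_self (hq : 1 < q) (n : ℕ) : gbinom q n n = 1 := by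
  have := (qFactorial_pos hq n).ne'
  rw [gbinom_eq_div hq le_rfl, Nat.sub_self, qFactorial_zero, mul_one, div_self this]

lemma gbinom_symm (hq : 1 < q) {n k : ℕ} (h : k ≤ n) : gbinom q n (n - k) = gbinom q n k := by
  rw [gbinom_eq_div hq (Nat.sub_le n k), gbinom_eq_div hq h, Nat.sub_sub_self h, mul_comm]

lemma gbinom_mul_gbinom (hq : 1 < q) {m i ℓ : ℕ} (h : i + ℓ ≤ m) :
    gbinom q m ℓ * gbinom q (m - ℓ) i = gbinom q m i * gbinom q (m - i) ℓ := by
  rw [gbinom_eq_div hq (by omega : ℓ ≤ m), gbinom_eq_div hq (by omega : i ≤ m - ℓ),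
    gbinom_eq_div hq (by omega : i ≤ m), gbinom_eq_div hq (by omega : ℓ ≤ m - i),
    Nat.sub_right_comm]
  have := (qFactorial_pos hq (m - ℓ)).ne'
  have := (qFactorial_pos hq (m - i)).ne'
  field_simp

lemma gbinom_succ_succ (hq : 1 < q) {n k : ℕ} (h : k < n) :
    gbinom q (n + 1) (k + 1) = gbinom q n k + q ^ (k + 1) * gbinom q n (k + 1) := by
  obtain ⟨s, rfl⟩ := Nat.exists_eq_add_of_lt h
  rw [gbinom_eq_div hq (by omega), gbinom_eq_div hq (by omega), gbinom_eq_div hq (by omega),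
    show k + s + 1 + 1 - (k + 1) = s + 1 by omega, show k + s + 1 - k = s + 1 by omega,
    show k + s + 1 - (k + 1) = s by omega, qFactorial_succ (k + s + 1), qFactorial_succ k,
    qFactorial_succ s]
  have := (qFactorial_pos hq k).ne'
  have := (qFactorial_pos hq s).ne'
  have : q ^ (k + 1) - 1 ≠ 0 := (sub_pos.2 (one_lt_pow₀ hq (by omega))).ne'
  have : q ^ (s + 1) - 1 ≠ 0 := (sub_pos.2 (one_lt_pow₀ hq (by omega))).ne'
  field_simp
  ring

lemma gbinom_succ_succ' (hq : 1 < q) {n k : ℕ} (h : k < n) :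
    gbinom q (n + 1) (k + 1) = q ^ (n - k) * gbinom q n k + gbinom q n (k + 1) := by
  obtain ⟨s, rfl⟩ := Nat.exists_eq_add_of_lt h
  rw [← gbinom_symm hq (show k + 1 ≤ k + s + 1 + 1 by omega), ← gbinom_symm hq h.le,
    ← gbinom_symm hq (show k + 1 ≤ k + s + 1 by omega),
    show k + s + 1 + 1 - (k + 1) = s + 1 by omega,
    show k + s + 1 - k = s + 1 by omega, show k + s + 1 - (k + 1) = s by omega,
    gbinom_succ_succ hq (show s < k + s + 1 by omega)]
  ring

lemma gbinom_sq_mul_prod (hq : 1 < q) {m i : ℕ} (h : i ≤ m) :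
    gbinom (q ^ 2) m i * ∏ k ∈ Icc 1 (m - i), (q ^ k + 1) =
      gbinom q m i * ∏ k ∈ Icc (i + 1) m, (q ^ k + 1) := by
  have hq2 : 1 < q ^ 2 := one_lt_pow₀ hq two_ne_zero
  have split := prod_Ioc_consecutive (fun k => q ^ k + 1) (Nat.zero_le i) h
  simp only [← Icc_add_one_left_eq_Ioc, zero_add] at split
  rw [gbinom_eq_div hq2 h, gbinom_eq_div hq h, qFactorial_sq, qFactorial_sq, qFactorial_sq,
    ← split]
  have := (qFactorial_pos hq i).ne'
  have := (qFactorial_pos hq (m - i)).ne'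
  have : 0 < ∏ k ∈ Icc 1 i, (q ^ k + 1) := prod_pos fun k _ => by positivity
  have : 0 < ∏ k ∈ Icc 1 (m - i), (q ^ k + 1) := prod_pos fun k _ => by positivity
  field_simp

theorem prod_sub_pow_eq_sum_gbinom (hq : 1 < q) (x : ℝ) (r : ℕ) :
    ∏ j ∈ range r, (x - q ^ j) =
      ∑ i ∈ range (r + 1), (-1) ^ (r - i) * q ^ (r - i).choose 2 * gbinom q r i * x ^ i := by
  induction r with
  | zero => simp [gbinom_zero_right]
  | succ r ih =>
    set f : ℕ → ℝ := fun i => (-1) ^ (r - i) * q ^ (r - i).choose 2 * gbinom q r i * x ^ i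
    have step : ∀ i ∈ range r, (-1) ^ (r + 1 - (i + 1)) * q ^ (r + 1 - (i + 1)).choose 2 *
        gbinom q (r + 1) (i + 1) * x ^ (i + 1) = f i * x - q ^ r * f (i + 1) := by
      intro i hi
      simp only [f]
      obtain ⟨s, rfl⟩ := Nat.exists_eq_add_of_lt (mem_range.1 hi)
      rw [gbinom_succ_succ hq (mem_range.1 hi), show i + s + 1 + 1 - (i + 1) = s + 1 by omega,
        show i + s + 1 - i = s + 1 by omega, show i + s + 1 - (i + 1) = s by omega,
        Nat.choose_succ_succ', Nat.choose_one_right]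
      ring
    rw [prod_range_succ, sum_range_succ' _ (r + 1), sum_range_succ _ r, sum_congr rfl step,
      sum_sub_distrib, ← sum_mul, ← mul_sum, ih]
    have hr := sum_range_succ f r
    have h0 := sum_range_succ' f r
    simp only [f, Nat.sub_self, Nat.sub_zero, gbinom_self hq, gbinom_zero_right,
      Nat.choose_succ_succ', Nat.choose_one_right, one_add_one_eq_two] at hr h0 ⊢
    linear_combination x * hr - q ^ r * h0

lemma choose_two_mul_two_add_self (n : ℕ) : n.choose 2 * 2 + n = n ^ 2 := by
  induction n with
  | zero => rfl
  | succ n ih => rw [Nat.choose_succ_succ', Nat.choose_one_right]; linarith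

lemma sum_pow_sq_mul_pow_choose_succ (hq2 : 1 < q ^ 2) (r : ℕ) :
    ∑ ℓ ∈ range (r + 1), q ^ ℓ ^ 2 * (q ^ 2) ^ (r + 1 - ℓ).choose 2 * gbinom (q ^ 2) r ℓ =
      q ^ r * ∑ ℓ ∈ range (r + 1), q ^ ℓ ^ 2 * (q ^ 2) ^ (r - ℓ).choose 2 * gbinom (q ^ 2) r ℓ := by
  rw [← sum_range_reflect, mul_sum]
  refine sum_congr rfl fun ℓ hℓ => ?_
  obtain ⟨a, rfl⟩ := Nat.exists_eq_add_of_le (Nat.lt_succ_iff.1 (mem_range.1 hℓ))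
  have hsymm := gbinom_symm hq2 (Nat.le_add_right ℓ a)
  rw [Nat.add_sub_cancel_left] at hsymm
  simp only [show ℓ + a + 1 - 1 - ℓ = a by omega, show ℓ + a + 1 - a = ℓ + 1 by omega,
    Nat.add_sub_cancel_left, hsymm, ← pow_mul, ← mul_assoc, ← pow_add]
  congr 2
  linarith [choose_two_mul_two_add_self a, choose_two_mul_two_add_self (ℓ + 1),
    choose_two_mul_two_add_self ℓ]

theorem sum_pow_sq_mul_gbinom_sq (hq : 1 < q) (r : ℕ) :
    ∑ ℓ ∈ range (r + 1), q ^ ℓ ^ 2 * (q ^ 2) ^ (r - ℓ).choose 2 * gbinom (q ^ 2) r ℓ =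
      q ^ r.choose 2 * ∏ k ∈ Icc 1 r, (q ^ k + 1) := by
  have hq2 : 1 < q ^ 2 := one_lt_pow₀ hq two_ne_zero
  induction r with
  | zero => simp [gbinom_zero_right]
  | succ r ih =>
    set s : ℕ → ℝ := fun ℓ =>
      q ^ ℓ ^ 2 * (q ^ 2) ^ (r - ℓ).choose 2 * gbinom (q ^ 2) r ℓ
    set u : ℕ → ℝ := fun ℓ =>
      q ^ ℓ ^ 2 * (q ^ 2) ^ (r + 1 - ℓ).choose 2 * gbinom (q ^ 2) r ℓ
    have reflect : ∑ ℓ ∈ range (r + 1), u ℓ = q ^ r * ∑ ℓ ∈ range (r + 1), s ℓ :=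
      sum_pow_sq_mul_pow_choose_succ hq2 r
    have pascal : ∀ ℓ ∈ range r, q ^ (ℓ + 1) ^ 2 * (q ^ 2) ^ (r + 1 - (ℓ + 1)).choose 2 *
        gbinom (q ^ 2) (r + 1) (ℓ + 1) = q ^ (2 * r + 1) * s ℓ + u (ℓ + 1) := by
      intro ℓ hℓ
      obtain ⟨a, rfl⟩ := Nat.exists_eq_add_of_lt (mem_range.1 hℓ)
      rw [gbinom_succ_succ' hq2 (mem_range.1 hℓ)]
      simp only [s, u, show ℓ + a + 1 + 1 - (ℓ + 1) = a + 1 by omega,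
        show ℓ + a + 1 - ℓ = a + 1 by omega, ← pow_mul]
      ring
    have top : q ^ (r + 1) ^ 2 * (q ^ 2) ^ (r + 1 - (r + 1)).choose 2 *
        gbinom (q ^ 2) (r + 1) (r + 1) = q ^ (2 * r + 1) * s r := by
      simp only [s, Nat.sub_self, gbinom_self hq2, Nat.choose_zero_succ]
      ring
    have bot : q ^ 0 ^ 2 * (q ^ 2) ^ (r + 1 - 0).choose 2 * gbinom (q ^ 2) (r + 1) 0 = u 0 := by
      simp only [u, gbinom_zero_right]
    rw [sum_range_succ', sum_range_succ _ r, sum_congr rfl pascal, sum_add_distrib, ← mul_sum,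
      Nat.choose_succ_succ', Nat.choose_one_right, prod_Icc_succ_top (by omega)]
    linear_combination (q ^ (2 * r + 1) + q ^ r) * ih - q ^ (2 * r + 1) * sum_range_succ s r -
      sum_range_succ' u r + reflect + top + bot

lemma pow_mul_prod_pow_sub_one_eq_sum (hq : 1 < q) {r N : ℕ} (h : r ≤ N) :
    q ^ (r * (r - 1)) * ∏ j ∈ range r, (q ^ (2 * (N - j)) - 1) =
      ∑ i ∈ range (r + 1), (-1) ^ (r - i) * (q ^ 2) ^ (r - i).choose 2 * gbinom (q ^ 2) r i *
        (q ^ (2 * N)) ^ i := by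
  rw [← prod_sub_pow_eq_sum_gbinom (one_lt_pow₀ hq two_ne_zero), pow_mul q 2 N,
    prod_range_pow_sub_pow _ h, ← Nat.div_two_mul_two_of_even (Nat.even_mul_pred_self _),
    ← Nat.choose_two_right, mul_comm _ 2, pow_mul]
  simp only [pow_mul]

lemma left_summand_eq_sum (hq : 1 < q) {m N i : ℕ} (hi : i ≤ m) :
    (-1 : ℝ) ^ (m - i) * q ^ ((m - i) * (m - i - 1) / 2) * gbinom q m i *
        (∏ k ∈ Icc (i + 1) m, (q ^ k + 1)) * q ^ ((2 * i + 1) * N) =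
      ∑ ℓ ∈ range (m - i + 1), (-1) ^ (m - i) * q ^ ((2 * i + 1) * N) * gbinom (q ^ 2) m i *
        (q ^ ℓ ^ 2 * (q ^ 2) ^ (m - i - ℓ).choose 2 * gbinom (q ^ 2) (m - i) ℓ) := by
  rw [← mul_sum, sum_pow_sq_mul_gbinom_sq hq, ← Nat.choose_two_right]
  linear_combination -(-1) ^ (m - i) * q ^ ((2 * i + 1) * N) * q ^ (m - i).choose 2 *
    gbinom_sq_mul_prod hq hi

lemma right_summand_eq_sum (hq : 1 < q) {m N ℓ : ℕ} (hℓ : ℓ ≤ m) (hmN : m ≤ N) :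
    (-1 : ℝ) ^ ℓ * q ^ (N + (m - ℓ) * (m - ℓ - 1) + ℓ ^ 2) * gbinom (q ^ 2) m ℓ *
        ∏ j ∈ range (m - ℓ), (q ^ (2 * (N - j)) - 1) =
      ∑ i ∈ range (m - ℓ + 1), (-1) ^ (m - i) * q ^ ((2 * i + 1) * N) * gbinom (q ^ 2) m i *
        (q ^ ℓ ^ 2 * (q ^ 2) ^ (m - i - ℓ).choose 2 * gbinom (q ^ 2) (m - i) ℓ) := by
  calc _ = (-1) ^ ℓ * q ^ (N + ℓ ^ 2) * gbinom (q ^ 2) m ℓ *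
        (q ^ ((m - ℓ) * (m - ℓ - 1)) * ∏ j ∈ range (m - ℓ), (q ^ (2 * (N - j)) - 1)) := by
        rw [pow_add, pow_add, pow_add]; ring
    _ = _ := by
      rw [pow_mul_prod_pow_sub_one_eq_sum hq (by omega), mul_sum]
      refine sum_congr rfl fun i hi => ?_
      have hiℓ : i + ℓ ≤ m := by have := mem_range.1 hi; omega
      have hsign : (-1 : ℝ) ^ (m - i) = (-1) ^ ℓ * (-1) ^ (m - ℓ - i) := by
        rw [← pow_add]; congr 1; omega
      have hpow : q ^ ((2 * i + 1) * N) = q ^ N * (q ^ (2 * N)) ^ i := by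
        rw [← pow_mul, ← pow_add]; ring_nf
      rw [hsign, hpow, Nat.sub_right_comm m i ℓ]
      linear_combination (-1) ^ ℓ * (-1) ^ (m - ℓ - i) * q ^ N * (q ^ (2 * N)) ^ i *
        q ^ ℓ ^ 2 * (q ^ 2) ^ (m - ℓ - i).choose 2 *
          gbinom_mul_gbinom (one_lt_pow₀ hq two_ne_zero) hiℓ

end

theorem stmt1 (q : ℝ) (hq : 1 < q) (m N : ℕ) (hmN : m ≤ N) :
    ∑ i ∈ Finset.range (m + 1),
      (-1 : ℝ) ^ (m - i) * q ^ ((m - i) * (m - i - 1) / 2) * gbinom q m i *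
        (∏ k ∈ Finset.Icc (i + 1) m, (q ^ k + 1)) * q ^ ((2 * i + 1) * N) =
    ∑ ℓ ∈ Finset.range (m + 1),
      (-1 : ℝ) ^ ℓ * q ^ (N + (m - ℓ) * (m - ℓ - 1) + ℓ ^ 2) * gbinom (q ^ 2) m ℓ *
        ∏ j ∈ Finset.range (m - ℓ), (q ^ (2 * (N - j)) - 1) := by
  let T : ℕ → ℕ → ℝ := fun i ℓ =>
    (-1) ^ (m - i) * q ^ ((2 * i + 1) * N) * gbinom (q ^ 2) m i *
      (q ^ ℓ ^ 2 * (q ^ 2) ^ (m - i - ℓ).choose 2 * gbinom (q ^ 2) (m - i) ℓ)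
  calc _ = ∑ i ∈ range (m + 1), ∑ ℓ ∈ range (m - i + 1), T i ℓ :=
        sum_congr rfl fun i hi => left_summand_eq_sum hq (Nat.lt_succ_iff.1 (mem_range.1 hi))
    _ = ∑ ℓ ∈ range (m + 1), ∑ i ∈ range (m - ℓ + 1), T i ℓ :=
        sum_comm' fun i ℓ => by simp only [mem_range]; omega
    _ = _ := (sum_congr rfl fun ℓ hℓ =>
        right_summand_eq_sum hq (Nat.lt_succ_iff.1 (mem_range.1 hℓ)) hmN).symm
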